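/- arXiv:1905.12103 — 7 statements merged into one kernel-verified Lean document; each statement's English description precedes it below -/
import Mathlib

section
/- Let η>0, a∈ℝ^m, b∈ℝ^n, c∈ℝ^n, d∈ℝ^m, A an m×n real matrix and B an n×m real matrix, and assume that Id−η²AB (and hence Id−η²BA) is invertible. Then the regularized bilinear game has exactly one Nash equilibrium (x*,y*), given by x* = −η(Id−η²AB)⁻¹(a−ηAb) and y* = −η(Id−η²BA)⁻¹(b−ηBa). -/
open Matrix

private lemma quad_key {k : ℕ} (η : ℝ) (hη : 0 < η) (v x : Fin k → ℝ) :
    x ⬝ᵥ v + (x ⬝ᵥ x) / (2 * η) =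
      ((x + η • v) ⬝ᵥ (x + η • v)) / (2 * η) - η * (v ⬝ᵥ v) / 2 := by
  have h : (x + η • v) ⬝ᵥ (x + η • v)
      = x ⬝ᵥ x + η * (x ⬝ᵥ v) + η * (v ⬝ᵥ x) + η * η * (v ⬝ᵥ v) := by
    simp [dotProduct_add, add_dotProduct, dotProduct_smul, smul_dotProduct,
      smul_eq_mul]
    ring
  rw [h, dotProduct_comm v x]
  field_simp
  ring

private lemma dot_self_nonneg {k : ℕ} (v : Fin k → ℝ) : 0 ≤ v ⬝ᵥ v :=
  Finset.sum_nonneg fun i _ => mul_self_nonneg (v i)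

/-- Minimizer characterization of the regularized linear objective. -/
private lemma quad_min {k : ℕ} (η : ℝ) (hη : 0 < η) (v x₀ : Fin k → ℝ) :
    (∀ x, x₀ ⬝ᵥ v + (x₀ ⬝ᵥ x₀) / (2 * η) ≤ x ⬝ᵥ v + (x ⬝ᵥ x) / (2 * η)) ↔
      x₀ = -(η • v) := by
  constructor
  · intro h
    have h1 := h (-(η • v))
    rw [quad_key η hη v x₀, quad_key η hη v (-(η • v))] at h1
    simp only [neg_add_cancel, zero_dotProduct, zero_div, zero_sub] at h1
    have h2 : ((x₀ + η • v) ⬝ᵥ (x₀ + η • v)) / (2 * η) ≤ 0 := by linarith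
    have h3 : (x₀ + η • v) ⬝ᵥ (x₀ + η • v) ≤ 0 := by
      by_contra hc
      push_neg at hc
      have : 0 < ((x₀ + η • v) ⬝ᵥ (x₀ + η • v)) / (2 * η) := by positivity
      linarith
    have h4 : (x₀ + η • v) ⬝ᵥ (x₀ + η • v) = 0 :=
      le_antisymm h3 (dot_self_nonneg _)
    have h5 : x₀ + η • v = 0 := dotProduct_self_eq_zero.mp h4
    exact eq_neg_of_add_eq_zero_left h5
  · intro h x
    subst h
    rw [quad_key η hη v x, quad_key η hη v (-(η • v))]
    simp only [neg_add_cancel, zero_dotProduct, zero_div, zero_sub]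
    have h0 : 0 ≤ ((x + η • v) ⬝ᵥ (x + η • v)) / (2 * η) := by
      have := dot_self_nonneg (x + η • v)
      positivity
    linarith

/-- The regularized bilinear game has exactly one Nash equilibrium,
given in closed form. -/
theorem cgd_unique_nash_deterministic (m n : ℕ) (η : ℝ) (hη : 0 < η)
    (a : Fin m → ℝ) (b : Fin n → ℝ) (c : Fin n → ℝ) (d : Fin m → ℝ)
    (A : Matrix (Fin m) (Fin n) ℝ) (B : Matrix (Fin n) (Fin m) ℝ)
    (hInv : IsUnit ((1 : Matrix (Fin m) (Fin m) ℝ) - (η ^ 2) • (A * B)))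
    (P₁ P₂ : (Fin m → ℝ) → (Fin n → ℝ) → ℝ)
    (hP₁ : ∀ x y, P₁ x y = x ⬝ᵥ a + x ⬝ᵥ A.mulVec y + y ⬝ᵥ c + (x ⬝ᵥ x) / (2 * η))
    (hP₂ : ∀ x y, P₂ x y = y ⬝ᵥ b + y ⬝ᵥ B.mulVec x + x ⬝ᵥ d + (y ⬝ᵥ y) / (2 * η))
    (xstar : Fin m → ℝ) (ystar : Fin n → ℝ)
    (hx : xstar = -(η • (((1 : Matrix (Fin m) (Fin m) ℝ) - (η ^ 2) • (A * B))⁻¹.mulVec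
      (a - η • A.mulVec b))))
    (hy : ystar = -(η • (((1 : Matrix (Fin n) (Fin n) ℝ) - (η ^ 2) • (B * A))⁻¹.mulVec
      (b - η • B.mulVec a)))) :
    ((∀ x', P₁ xstar ystar ≤ P₁ x' ystar) ∧ (∀ y', P₂ xstar ystar ≤ P₂ xstar y')) ∧
      (∀ x y, ((∀ x', P₁ x y ≤ P₁ x' y) ∧ (∀ y', P₂ x y ≤ P₂ x y')) →
        x = xstar ∧ y = ystar) := by
  set M : Matrix (Fin m) (Fin m) ℝ := (1 : Matrix (Fin m) (Fin m) ℝ) - (η ^ 2) • (A * B) with hM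
  set N : Matrix (Fin n) (Fin n) ℝ := (1 : Matrix (Fin n) (Fin n) ℝ) - (η ^ 2) • (B * A) with hN
  -- determinants
  have hMdet : IsUnit M.det := (Matrix.isUnit_iff_isUnit_det M).mp hInv
  have hdetEq : M.det = N.det := by
    have h := Matrix.det_one_sub_mul_comm ((η ^ 2) • A) B
    rw [Matrix.smul_mul, Matrix.mul_smul, ← hM, ← hN] at h
    exact h
  have hNdet : IsUnit N.det := hdetEq ▸ hMdet
  have hMM : M * M⁻¹ = 1 := Matrix.mul_nonsing_inv M hMdet
  have hMM' : M⁻¹ * M = 1 := Matrix.nonsing_inv_mul M hMdet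
  have hNN : N * N⁻¹ = 1 := Matrix.mul_nonsing_inv N hNdet
  have hNN' : N⁻¹ * N = 1 := Matrix.nonsing_inv_mul N hNdet
  -- intertwining identities
  have hMA : M * A = A * N := by
    rw [hM, hN]
    simp only [Matrix.sub_mul, Matrix.mul_sub, Matrix.one_mul, Matrix.mul_one,
      Matrix.smul_mul, Matrix.mul_smul, Matrix.mul_assoc]
  have hBM : B * M = N * B := by
    rw [hM, hN]
    simp only [Matrix.sub_mul, Matrix.mul_sub, Matrix.one_mul, Matrix.mul_one,
      Matrix.smul_mul, Matrix.mul_smul, Matrix.mul_assoc]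
  have hAinv : A * N⁻¹ = M⁻¹ * A := by
    calc A * N⁻¹ = (M⁻¹ * M) * A * N⁻¹ := by rw [hMM', Matrix.one_mul]
    _ = M⁻¹ * (M * A) * N⁻¹ := by rw [Matrix.mul_assoc M⁻¹]
    _ = M⁻¹ * (A * N) * N⁻¹ := by rw [hMA]
    _ = M⁻¹ * A * (N * N⁻¹) := by rw [Matrix.mul_assoc, Matrix.mul_assoc, Matrix.mul_assoc]
    _ = M⁻¹ * A := by rw [hNN, Matrix.mul_one]
  have hBinv : B * M⁻¹ = N⁻¹ * B := by
    calc B * M⁻¹ = (N⁻¹ * N) * B * M⁻¹ := by rw [hNN', Matrix.one_mul]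
    _ = N⁻¹ * (N * B) * M⁻¹ := by rw [Matrix.mul_assoc N⁻¹]
    _ = N⁻¹ * (B * M) * M⁻¹ := by rw [hBM]
    _ = N⁻¹ * B * (M * M⁻¹) := by rw [Matrix.mul_assoc, Matrix.mul_assoc, Matrix.mul_assoc]
    _ = N⁻¹ * B := by rw [hMM, Matrix.mul_one]
  -- Characterize best responses
  have hbest₁ : ∀ x y, (∀ x', P₁ x y ≤ P₁ x' y) ↔ x = -(η • (a + A.mulVec y)) := by
    intro x y
    have hform : ∀ x', P₁ x' y
        = x' ⬝ᵥ (a + A.mulVec y) + (x' ⬝ᵥ x') / (2 * η) + y ⬝ᵥ c := by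
      intro x'
      rw [hP₁, dotProduct_add]
      ring
    constructor
    · intro h
      apply (quad_min η hη (a + A.mulVec y) x).mp
      intro x'
      have := h x'
      rw [hform x, hform x'] at this
      linarith
    · intro h x'
      rw [hform x, hform x']
      have := (quad_min η hη (a + A.mulVec y) x).mpr h x'
      linarith
  have hbest₂ : ∀ x y, (∀ y', P₂ x y ≤ P₂ x y') ↔ y = -(η • (b + B.mulVec x)) := by
    intro x y
    have hform : ∀ y', P₂ x y'
        = y' ⬝ᵥ (b + B.mulVec x) + (y' ⬝ᵥ y') / (2 * η) + x ⬝ᵥ d := by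
      intro y'
      rw [hP₂, dotProduct_add]
      ring
    constructor
    · intro h
      apply (quad_min η hη (b + B.mulVec x) y).mp
      intro y'
      have := h y'
      rw [hform y, hform y'] at this
      linarith
    · intro h y'
      rw [hform y, hform y']
      have := (quad_min η hη (b + B.mulVec x) y).mpr h y'
      linarith
  -- The closed-form point satisfies the fixed-point equations
  have e1 : B.mulVec xstar = N⁻¹.mulVec (-(η • B.mulVec (a - η • A.mulVec b))) := by
    rw [hx, Matrix.mulVec_neg, Matrix.mulVec_smul, Matrix.mulVec_mulVec, hBinv,
      ← Matrix.mulVec_mulVec, ← Matrix.mulVec_smul, ← Matrix.mulVec_neg]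
  have e1' : A.mulVec ystar = M⁻¹.mulVec (-(η • A.mulVec (b - η • B.mulVec a))) := by
    rw [hy, Matrix.mulVec_neg, Matrix.mulVec_smul, Matrix.mulVec_mulVec, hAinv,
      ← Matrix.mulVec_mulVec, ← Matrix.mulVec_smul, ← Matrix.mulVec_neg]
  have e3 : b - η • B.mulVec a
      = N.mulVec b + -(η • B.mulVec (a - η • A.mulVec b)) := by
    rw [hN, Matrix.sub_mulVec, Matrix.one_mulVec, Matrix.smul_mulVec,
      ← Matrix.mulVec_mulVec, Matrix.mulVec_sub, Matrix.mulVec_smul]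
    module
  have e3' : a - η • A.mulVec b
      = M.mulVec a + -(η • A.mulVec (b - η • B.mulVec a)) := by
    rw [hM, Matrix.sub_mulVec, Matrix.one_mulVec, Matrix.smul_mulVec,
      ← Matrix.mulVec_mulVec, Matrix.mulVec_sub, Matrix.mulVec_smul]
    module
  have hfix₂ : ystar = -(η • (b + B.mulVec xstar)) := by
    rw [hy, e3, Matrix.mulVec_add, Matrix.mulVec_mulVec, hNN', Matrix.one_mulVec, ← e1]
  have hfix₁ : xstar = -(η • (a + A.mulVec ystar)) := by
    rw [hx, e3', Matrix.mulVec_add, Matrix.mulVec_mulVec, hMM', Matrix.one_mulVec, ← e1']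
  refine ⟨⟨(hbest₁ xstar ystar).mpr hfix₁, (hbest₂ xstar ystar).mpr hfix₂⟩, ?_⟩
  rintro x y ⟨h1, h2⟩
  rw [hbest₁ x y] at h1
  rw [hbest₂ x y] at h2
  -- substitute h2 into h1
  have h1a : x = -(η • (a + A.mulVec (-(η • (b + B.mulVec x))))) := by rw [← h2]; exact h1
  rw [Matrix.mulVec_neg, Matrix.mulVec_smul, Matrix.mulVec_add] at h1a
  have h1' : x = -(η • a) + η ^ 2 • A.mulVec b + η ^ 2 • A.mulVec (B.mulVec x) :=
    h1a.trans (by module)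
  have h3 : x - η ^ 2 • A.mulVec (B.mulVec x) = -(η • a) + η ^ 2 • A.mulVec b := by
    have h4 := congrArg (fun z => z - η ^ 2 • A.mulVec (B.mulVec x)) h1'
    simp only [add_sub_cancel_right] at h4
    exact h4
  have hMx : M.mulVec x = -(η • (a - η • A.mulVec b)) := by
    rw [hM, Matrix.sub_mulVec, Matrix.one_mulVec, Matrix.smul_mulVec,
      ← Matrix.mulVec_mulVec, h3]
    module
  have hxeq : x = xstar := by
    have h5 : x = M⁻¹.mulVec (M.mulVec x) := by
      rw [Matrix.mulVec_mulVec, hMM', Matrix.one_mulVec]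
    rw [h5, hMx, Matrix.mulVec_neg, Matrix.mulVec_smul, hx]
  refine ⟨hxeq, ?_⟩
  rw [h2, hxeq, ← hfix₂]
end

section
/- Let η>0, a∈ℝ^m, b∈ℝ^n, c∈ℝ^n, d∈ℝ^m, A an m×n real matrix and B an n×m real matrix with Id−η²AB invertible. Let μ be a probability measure on ℝ^m and ν a probability measure on ℝ^n, each with finite second moment, and define the expected payoffs J₁(μ,ν)=∫∫P₁(x,y)dμ(x)dν(y) and J₂(μ,ν)=∫∫P₂(x,y)dμ(x)dν(y). If (μ,ν) is a Nash equilibrium among all such randomized strategies (i.e. J₁(μ,ν)≤J₁(μ',ν) for every finite-second-moment probability measure μ' on ℝ^m, and J₂(μ,ν)≤J₂(μ,ν') for every finite-second-moment probability measure ν' on ℝ^n), then μ is the Dirac measure at x* = −η(Id−η²AB)⁻¹(a−ηAb) and ν is the Dirac measure at y* = −η(Id−η²BA)⁻¹(b−ηBa). -/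
open Matrix MeasureTheory RealInnerProductSpace

/-- Reinterpret a plain vector as an element of Euclidean space. -/
def toEucl {k : ℕ} (v : Fin k → ℝ) : EuclideanSpace ℝ (Fin k) := WithLp.toLp 2 v

/-- Reinterpret a Euclidean vector as a plain vector. -/
def toPi {k : ℕ} (v : EuclideanSpace ℝ (Fin k)) : Fin k → ℝ := v

namespace CGDAux

variable {k : ℕ}

lemma dv_inner (v w : EuclideanSpace ℝ (Fin k)) : v ⬝ᵥ w = ⟪v, w⟫ := by
  simp [PiLp.inner_apply, dotProduct, RCLike.inner_apply, mul_comm]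

lemma dv_inner' (u : Fin k → ℝ) (v : EuclideanSpace ℝ (Fin k)) : u ⬝ᵥ v = ⟪toEucl u, v⟫ :=
  dv_inner (toEucl u) v

lemma eq_dirac_of_ae {α : Type*} [MeasurableSpace α] [MeasurableSingletonClass α]
    (μ : Measure α) [IsProbabilityMeasure μ] (c : α) (h : ∀ᵐ x ∂μ, x = c) :
    μ = Measure.dirac c := by
  have hc0 : μ {x | ¬ x = c} = 0 := ae_iff.mp h
  have hcc : μ {c} = 1 := by
    rw [← prob_compl_eq_zero_iff (measurableSet_singleton c)] at *
    · convert hc0 using 2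
      ext; simp
  ext s hs
  have hsplit : μ (s ∩ {c}) + μ (s \ {c}) = μ s := measure_inter_add_diff s (measurableSet_singleton c)
  have hdiff : μ (s \ {c}) = 0 := by
    refine measure_mono_null ?_ hc0
    intro x hx
    exact hx.2
  by_cases hcs : c ∈ s
  · have : s ∩ {c} = {c} := Set.inter_eq_right.mpr (Set.singleton_subset_iff.mpr hcs)
    rw [Measure.dirac_apply' _ hs, Set.indicator_of_mem hcs]
    rw [← hsplit, hdiff, this, hcc]
    simp
  · have : s ∩ {c} = ∅ := Set.inter_singleton_eq_empty.mpr hcs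
    rw [Measure.dirac_apply' _ hs, Set.indicator_of_notMem hcs]
    rw [← hsplit, hdiff, this]
    simp

lemma int_id (ρ : Measure (EuclideanSpace ℝ (Fin k))) [IsProbabilityMeasure ρ]
    (h2 : Integrable (fun v => ‖v‖ ^ 2) ρ) :
    Integrable (fun v : EuclideanSpace ℝ (Fin k) => v) ρ := by
  rw [show (fun v : EuclideanSpace ℝ (Fin k) => v) = id from rfl,
    ← integrable_norm_iff aestronglyMeasurable_id]
  refine ((integrable_const (1 : ℝ)).add h2).mono' continuous_norm.aestronglyMeasurable ?_
  filter_upwards with v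
  simp only [Pi.add_apply, id_eq]
  rw [Real.norm_eq_abs, abs_of_nonneg (norm_nonneg _)]
  nlinarith [norm_nonneg v, sq_nonneg (‖v‖ - 1)]

lemma int_dot {ρ : Measure (EuclideanSpace ℝ (Fin k))}
    (hid : Integrable (fun v : EuclideanSpace ℝ (Fin k) => v) ρ) (u : Fin k → ℝ) :
    Integrable (fun v : EuclideanSpace ℝ (Fin k) => u ⬝ᵥ v) ρ := by
  have h := ContinuousLinearMap.integrable_comp (innerSL ℝ (toEucl u)) hid
  refine h.congr (Filter.Eventually.of_forall fun v => ?_)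
  simp only [innerSL_apply_apply]
  exact (dv_inner' u v).symm

lemma int_dot' {ρ : Measure (EuclideanSpace ℝ (Fin k))}
    (hid : Integrable (fun v : EuclideanSpace ℝ (Fin k) => v) ρ) (u : Fin k → ℝ) :
    Integrable (fun v : EuclideanSpace ℝ (Fin k) => v ⬝ᵥ u) ρ :=
  (int_dot hid u).congr (Filter.Eventually.of_forall fun v => dotProduct_comm u v)

lemma int_dot_eval {ρ : Measure (EuclideanSpace ℝ (Fin k))}
    (hid : Integrable (fun v : EuclideanSpace ℝ (Fin k) => v) ρ) (u : Fin k → ℝ) :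
    ∫ v, u ⬝ᵥ v ∂ρ = u ⬝ᵥ (∫ v, v ∂ρ : EuclideanSpace ℝ (Fin k)) := by
  rw [integral_congr_ae (Filter.Eventually.of_forall fun v => dv_inner' u v),
    integral_inner hid (toEucl u), ← dv_inner']

lemma int_self_dot {ρ : Measure (EuclideanSpace ℝ (Fin k))}
    (h2 : Integrable (fun v => ‖v‖ ^ 2) ρ) (r : ℝ) :
    Integrable (fun v : EuclideanSpace ℝ (Fin k) => v ⬝ᵥ v / r) ρ := by
  refine (h2.div_const r).congr (Filter.Eventually.of_forall fun v => ?_)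
  show ‖v‖ ^ 2 / r = v ⬝ᵥ v / r
  rw [dv_inner, real_inner_self_eq_norm_sq]

lemma int_dirac_sq (z : EuclideanSpace ℝ (Fin k)) :
    Integrable (fun x => ‖x‖ ^ 2) (Measure.dirac z) := by
  refine ⟨(continuous_norm.pow 2).aestronglyMeasurable, ?_⟩
  simp only [HasFiniteIntegral, lintegral_dirac]
  exact ENNReal.coe_lt_top

lemma key (η : ℝ) (hη : 0 < η) (w : EuclideanSpace ℝ (Fin k))
    (μ : Measure (EuclideanSpace ℝ (Fin k))) [IsProbabilityMeasure μ]
    (h2 : Integrable (fun x => ‖x‖ ^ 2) μ)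
    (hle : ∀ z : EuclideanSpace ℝ (Fin k),
      ∫ x, (x ⬝ᵥ w + x ⬝ᵥ x / (2 * η)) ∂μ ≤ z ⬝ᵥ w + z ⬝ᵥ z / (2 * η)) :
    μ = Measure.dirac ((-η) • w) := by
  have hpt : ∀ x : EuclideanSpace ℝ (Fin k),
      x ⬝ᵥ w + x ⬝ᵥ x / (2 * η) = ‖x + η • w‖ ^ 2 / (2 * η) - (η / 2) * ‖w‖ ^ 2 := by
    intro x
    rw [dv_inner, dv_inner, real_inner_self_eq_norm_sq]
    have hexp : ‖x + η • w‖ ^ 2 = ‖x‖ ^ 2 + 2 * (η * ⟪x, w⟫) + η ^ 2 * ‖w‖ ^ 2 := by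
      rw [norm_add_sq_real, real_inner_smul_right, norm_smul, mul_pow, Real.norm_eq_abs, sq_abs]
    rw [hexp]
    field_simp
    ring
  have hq_int : Integrable (fun x : EuclideanSpace ℝ (Fin k) => ‖x + η • w‖ ^ 2) μ := by
    refine (((h2.const_mul 2).add (integrable_const (2 * ‖η • w‖ ^ 2))).mono'
      (Continuous.aestronglyMeasurable (by continuity)) ?_)
    filter_upwards with x
    simp only [Pi.add_apply]
    rw [Real.norm_eq_abs, abs_of_nonneg (by positivity)]
    have h := norm_add_le x (η • w)
    nlinarith [norm_nonneg (x + η • w), norm_nonneg x, norm_nonneg (η • w),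
      sq_nonneg (‖x‖ - ‖η • w‖)]
  have hI : ∫ x, (x ⬝ᵥ w + x ⬝ᵥ x / (2 * η)) ∂μ
      = (∫ x, ‖x + η • w‖ ^ 2 ∂μ) / (2 * η) - (η / 2) * ‖w‖ ^ 2 := by
    rw [integral_congr_ae (Filter.Eventually.of_forall hpt),
      integral_sub (hq_int.div_const _) (integrable_const _), integral_div, integral_const]
    simp
  have hz := hle ((-η) • w)
  have hzero : ((-η) • w + η • w : EuclideanSpace ℝ (Fin k)) = 0 := by
    rw [← add_smul]
    simp
  rw [hI, hpt ((-η) • w), hzero, norm_zero] at hz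
  have hqn : (0 : ℝ) ≤ ∫ x, ‖x + η • w‖ ^ 2 ∂μ :=
    integral_nonneg fun x => by positivity
  have hq0 : ∫ x, ‖x + η • w‖ ^ 2 ∂μ = 0 := by
    have h2η : (0 : ℝ) < 2 * η := by linarith
    have hz' : (∫ x, ‖x + η • w‖ ^ 2 ∂μ) / (2 * η) ≤ 0 := by
      have h0 : (0 : ℝ) ^ 2 / (2 * η) = 0 := by norm_num
      rw [h0] at hz
      linarith
    rcases div_nonpos_iff.mp hz' with ⟨_, hb⟩ | ⟨ha, _⟩
    · linarith
    · linarith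
  have hae := (integral_eq_zero_iff_of_nonneg (fun x => by positivity) hq_int).mp hq0
  refine eq_dirac_of_ae μ _ ?_
  filter_upwards [hae] with x hx
  have hx0 : x + η • w = 0 := by
    have : ‖x + η • w‖ ^ 2 = 0 := hx
    have := pow_eq_zero_iff (two_ne_zero) |>.mp this
    rwa [norm_eq_zero] at this
  rw [neg_smul]
  exact eq_neg_of_add_eq_zero_left hx0

end CGDAux

open CGDAux

/-- every Nash equilibrium of the regularized bilinear game among
randomized strategies with finite second moment is the pair of Dirac measures at
the closed-form deterministic Nash equilibrium. -/
theorem cgd_unique_nash_randomized (m n : ℕ) (η : ℝ) (hη : 0 < η)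
    (a : EuclideanSpace ℝ (Fin m)) (b : EuclideanSpace ℝ (Fin n))
    (c : EuclideanSpace ℝ (Fin n)) (d : EuclideanSpace ℝ (Fin m))
    (A : Matrix (Fin m) (Fin n) ℝ) (B : Matrix (Fin n) (Fin m) ℝ)
    (hInv : IsUnit ((1 : Matrix (Fin m) (Fin m) ℝ) - (η ^ 2) • (A * B)))
    (P₁ P₂ : EuclideanSpace ℝ (Fin m) → EuclideanSpace ℝ (Fin n) → ℝ)
    (hP₁ : ∀ x y, P₁ x y = x ⬝ᵥ a + x ⬝ᵥ A.mulVec y + y ⬝ᵥ c + (x ⬝ᵥ x) / (2 * η))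
    (hP₂ : ∀ x y, P₂ x y = y ⬝ᵥ b + y ⬝ᵥ B.mulVec x + x ⬝ᵥ d + (y ⬝ᵥ y) / (2 * η))
    (μ : Measure (EuclideanSpace ℝ (Fin m))) (ν : Measure (EuclideanSpace ℝ (Fin n)))
    [IsProbabilityMeasure μ] [IsProbabilityMeasure ν]
    (hμ2 : Integrable (fun x => ‖x‖ ^ 2) μ) (hν2 : Integrable (fun y => ‖y‖ ^ 2) ν)
    (hNash₁ : ∀ μ' : Measure (EuclideanSpace ℝ (Fin m)), IsProbabilityMeasure μ' →
      Integrable (fun x => ‖x‖ ^ 2) μ' →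
      ∫ x, ∫ y, P₁ x y ∂ν ∂μ ≤ ∫ x, ∫ y, P₁ x y ∂ν ∂μ')
    (hNash₂ : ∀ ν' : Measure (EuclideanSpace ℝ (Fin n)), IsProbabilityMeasure ν' →
      Integrable (fun y => ‖y‖ ^ 2) ν' →
      ∫ x, ∫ y, P₂ x y ∂ν ∂μ ≤ ∫ x, ∫ y, P₂ x y ∂ν' ∂μ) :
    μ = Measure.dirac (toEucl (-(η • (((1 : Matrix (Fin m) (Fin m) ℝ)
          - (η ^ 2) • (A * B))⁻¹.mulVec (a - η • toEucl (A.mulVec b)))))) ∧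
    ν = Measure.dirac (toEucl (-(η • (((1 : Matrix (Fin n) (Fin n) ℝ)
          - (η ^ 2) • (B * A))⁻¹.mulVec (b - η • toEucl (B.mulVec a)))))) := by
  have hidμ := int_id μ hμ2
  have hidν := int_id ν hν2
  have hqμ : Integrable (fun x : EuclideanSpace ℝ (Fin m) => x ⬝ᵥ x / (2 * η)) μ :=
    int_self_dot hμ2 _
  have hqν : Integrable (fun y : EuclideanSpace ℝ (Fin n) => y ⬝ᵥ y / (2 * η)) ν :=
    int_self_dot hν2 _
  set xb : EuclideanSpace ℝ (Fin m) := ∫ x, x ∂μ with hxb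
  set yb : EuclideanSpace ℝ (Fin n) := ∫ y, y ∂ν with hyb
  set T : ℝ := ∫ y, (y ⬝ᵥ y / (2 * η) : ℝ) ∂ν with hT
  -- Player 1 inner integral
  have hInner1 : ∀ x : EuclideanSpace ℝ (Fin m),
      ∫ y, P₁ x y ∂ν = (x ⬝ᵥ (a + toEucl (A *ᵥ yb)) + x ⬝ᵥ x / (2 * η)) + c ⬝ᵥ yb := by
    intro x
    have hrw : ∀ y : EuclideanSpace ℝ (Fin n),
        P₁ x y = (x ᵥ* A + toPi c) ⬝ᵥ y + (x ⬝ᵥ a + x ⬝ᵥ x / (2 * η)) := by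
      intro y
      rw [hP₁, add_dotProduct, Matrix.dotProduct_mulVec, dotProduct_comm y c]
      simp only [toPi]
      ring
    rw [integral_congr_ae (Filter.Eventually.of_forall hrw),
      integral_add (int_dot hidν _) (integrable_const _),
      int_dot_eval hidν, integral_const, ← hyb]
    simp only [measure_univ, ENNReal.toReal_one, probReal_univ, one_smul, smul_eq_mul, one_mul]
    simp only [toPi, toEucl]
    rw [add_dotProduct, dotProduct_add, Matrix.dotProduct_mulVec]
    ring
  have H1 : Integrable
      (fun x : EuclideanSpace ℝ (Fin m) => x ⬝ᵥ (a + toEucl (A *ᵥ yb)) + x ⬝ᵥ x / (2 * η)) μ := by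
    exact ((int_dot' hidμ (a + toEucl (A *ᵥ yb))).add hqμ)
  have hkey1 : ∀ z : EuclideanSpace ℝ (Fin m),
      ∫ x, (x ⬝ᵥ (a + toEucl (A *ᵥ yb)) + x ⬝ᵥ x / (2 * η)) ∂μ
        ≤ z ⬝ᵥ (a + toEucl (A *ᵥ yb)) + z ⬝ᵥ z / (2 * η) := by
    intro z
    have hd := hNash₁ (Measure.dirac z) inferInstance (int_dirac_sq z)
    rw [integral_dirac] at hd
    simp only [hInner1] at hd
    rw [integral_add H1 (integrable_const _), integral_const] at hd
    simp only [measure_univ, ENNReal.toReal_one, probReal_univ, one_smul, smul_eq_mul, one_mul] at hd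
    linarith
  have hμd : μ = Measure.dirac ((-η) • (a + toEucl (A *ᵥ yb))) :=
    key η hη _ μ hμ2 hkey1
  have hE1 : xb = (-η) • (a + toEucl (A *ᵥ yb)) := by
    rw [hxb, hμd, integral_dirac]
  -- Player 2
  have hInner2 : ∀ x : EuclideanSpace ℝ (Fin m),
      ∫ y, P₂ x y ∂ν = (toPi b + B *ᵥ x) ⬝ᵥ yb + T + x ⬝ᵥ d := by
    intro x
    have hrw : ∀ y : EuclideanSpace ℝ (Fin n),
        P₂ x y = ((toPi b + B *ᵥ x) ⬝ᵥ y + y ⬝ᵥ y / (2 * η)) + x ⬝ᵥ d := by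
      intro y
      rw [hP₂, add_dotProduct, dotProduct_comm y b, dotProduct_comm y (B *ᵥ x)]
      simp only [toPi]
      ring
    have hfg : Integrable (fun y : EuclideanSpace ℝ (Fin n) =>
        (toPi b + B *ᵥ x) ⬝ᵥ y + y ⬝ᵥ y / (2 * η)) ν := (int_dot hidν _).add hqν
    rw [integral_congr_ae (Filter.Eventually.of_forall hrw),
      integral_add hfg (integrable_const _),
      integral_add (int_dot hidν _) hqν,
      int_dot_eval hidν, integral_const, ← hyb, ← hT]
    simp only [measure_univ, ENNReal.toReal_one, probReal_univ, one_smul, smul_eq_mul, one_mul]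
  have hJ2 : ∫ x, ∫ y, P₂ x y ∂ν ∂μ
      = (yb ᵥ* B + toPi d) ⬝ᵥ xb + (toPi b ⬝ᵥ yb + T) := by
    have hrw3 : ∀ x : EuclideanSpace ℝ (Fin m),
        (∫ y, P₂ x y ∂ν) = (yb ᵥ* B + toPi d) ⬝ᵥ x + (toPi b ⬝ᵥ yb + T) := by
      intro x
      rw [hInner2 x, add_dotProduct, add_dotProduct, ← Matrix.dotProduct_mulVec,
        dotProduct_comm yb (B *ᵥ x), dotProduct_comm x d]
      simp only [toPi]
      ring
    rw [integral_congr_ae (Filter.Eventually.of_forall hrw3),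
      integral_add (int_dot hidμ _) (integrable_const _),
      int_dot_eval hidμ, integral_const, ← hxb]
    simp only [measure_univ, ENNReal.toReal_one, probReal_univ, one_smul, smul_eq_mul, one_mul]
  have hkey2 : ∀ z : EuclideanSpace ℝ (Fin n),
      ∫ y, (y ⬝ᵥ (b + toEucl (B *ᵥ xb)) + y ⬝ᵥ y / (2 * η)) ∂ν
        ≤ z ⬝ᵥ (b + toEucl (B *ᵥ xb)) + z ⬝ᵥ z / (2 * η) := by
    intro z
    have hd := hNash₂ (Measure.dirac z) inferInstance (int_dirac_sq z)
    rw [hJ2] at hd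
    have hrhs : ∫ x, ∫ y, P₂ x y ∂(Measure.dirac z) ∂μ
        = (z ᵥ* B + toPi d) ⬝ᵥ xb + (z ⬝ᵥ b + z ⬝ᵥ z / (2 * η)) := by
      have h1 : ∀ x : EuclideanSpace ℝ (Fin m),
          ∫ y, P₂ x y ∂(Measure.dirac z)
            = (z ᵥ* B + toPi d) ⬝ᵥ x + (z ⬝ᵥ b + z ⬝ᵥ z / (2 * η)) := by
        intro x
        rw [integral_dirac, hP₂, add_dotProduct, Matrix.dotProduct_mulVec,
          dotProduct_comm x d]
        simp only [toPi]
        ring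
      rw [integral_congr_ae (Filter.Eventually.of_forall h1),
        integral_add (int_dot hidμ _) (integrable_const _),
        int_dot_eval hidμ, integral_const, ← hxb]
      simp only [measure_univ, ENNReal.toReal_one, probReal_univ, one_smul, smul_eq_mul, one_mul]
    rw [hrhs] at hd
    have hL : ∫ y, (y ⬝ᵥ (b + toEucl (B *ᵥ xb)) + y ⬝ᵥ y / (2 * η)) ∂ν
        = (b + toEucl (B *ᵥ xb)) ⬝ᵥ yb + T := by
      have hc : ∀ y : EuclideanSpace ℝ (Fin n),
          y ⬝ᵥ (b + toEucl (B *ᵥ xb)) + y ⬝ᵥ y / (2 * η)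
            = (b + toEucl (B *ᵥ xb)) ⬝ᵥ y + y ⬝ᵥ y / (2 * η) := by
        intro y
        rw [dotProduct_comm y (b + toEucl (B *ᵥ xb))]
        rfl
      rw [integral_congr_ae (Filter.Eventually.of_forall hc),
        integral_add (int_dot hidν _) hqν, int_dot_eval hidν, ← hyb, ← hT]
    rw [hL]
    have e1 : (b + toEucl (B *ᵥ xb)) ⬝ᵥ yb
        = toPi b ⬝ᵥ yb + (yb ᵥ* B) ⬝ᵥ xb := by
      rw [WithLp.ofLp_add, add_dotProduct]
      simp only [toPi, toEucl]
      rw [dotProduct_comm (B *ᵥ xb) yb, Matrix.dotProduct_mulVec]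
    have e2 : z ⬝ᵥ (b + toEucl (B *ᵥ xb)) = z ⬝ᵥ b + (z ᵥ* B) ⬝ᵥ xb := by
      rw [dotProduct_add]
      simp only [toPi, toEucl]
      rw [Matrix.dotProduct_mulVec]
    have e3 : (yb ᵥ* B + toPi d) ⬝ᵥ xb
        = (yb ᵥ* B) ⬝ᵥ xb + toPi d ⬝ᵥ xb := add_dotProduct _ _ _
    have e4 : (z ᵥ* B + toPi d) ⬝ᵥ xb
        = (z ᵥ* B) ⬝ᵥ xb + toPi d ⬝ᵥ xb := add_dotProduct _ _ _
    rw [e1, e2]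
    rw [e3, e4] at hd
    linarith
  have hνd : ν = Measure.dirac ((-η) • (b + toEucl (B *ᵥ xb))) :=
    key η hη _ ν hν2 hkey2
  have hE2 : yb = (-η) • (b + toEucl (B *ᵥ xb)) := by
    rw [hyb, hνd, integral_dirac]
  -- linear algebra
  set M1 : Matrix (Fin m) (Fin m) ℝ :=
    (1 : Matrix (Fin m) (Fin m) ℝ) - (η ^ 2) • (A * B) with hM1
  set M2 : Matrix (Fin n) (Fin n) ℝ :=
    (1 : Matrix (Fin n) (Fin n) ℝ) - (η ^ 2) • (B * A) with hM2
  have hdet1 : IsUnit M1.det := (Matrix.isUnit_iff_isUnit_det M1).mp hInv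
  have hdet2 : IsUnit M2.det := by
    have h := Matrix.det_one_add_mul_comm ((-(η ^ 2) : ℝ) • A) B
    have e1 : (1 : Matrix (Fin m) (Fin m) ℝ) + ((-(η ^ 2) : ℝ) • A) * B = M1 := by
      rw [hM1, Matrix.smul_mul, neg_smul, ← sub_eq_add_neg]
    have e2 : (1 : Matrix (Fin n) (Fin n) ℝ) + B * ((-(η ^ 2) : ℝ) • A) = M2 := by
      rw [hM2, Matrix.mul_smul, neg_smul, ← sub_eq_add_neg]
    rw [e1, e2] at h
    rw [← h]
    exact hdet1
  have hE1p : toPi xb = (-η) • (toPi a + A *ᵥ toPi yb) := congrArg WithLp.ofLp hE1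
  have hE2p : toPi yb = (-η) • (toPi b + B *ᵥ toPi xb) := congrArg WithLp.ofLp hE2
  have hsub1 : toPi xb = (-η) • toPi a + (η ^ 2) • (A *ᵥ toPi b)
      + (η ^ 2) • (A *ᵥ (B *ᵥ toPi xb)) := by
    conv_lhs => rw [hE1p, hE2p]
    simp only [Matrix.mulVec_smul, Matrix.mulVec_add]
    module
  have hsub2 : toPi yb = (-η) • toPi b + (η ^ 2) • (B *ᵥ toPi a)
      + (η ^ 2) • (B *ᵥ (A *ᵥ toPi yb)) := by
    conv_lhs => rw [hE2p, hE1p]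
    simp only [Matrix.mulVec_smul, Matrix.mulVec_add]
    module
  have hMx : M1 *ᵥ toPi xb = (-η) • (toPi a - η • (A *ᵥ toPi b)) := by
    have hstep : toPi xb - (η ^ 2) • (A *ᵥ (B *ᵥ toPi xb))
        = (-η) • (toPi a - η • (A *ᵥ toPi b)) := by
      nth_rewrite 1 [hsub1]
      module
    rw [hM1, Matrix.sub_mulVec, Matrix.one_mulVec, Matrix.smul_mulVec,
      ← Matrix.mulVec_mulVec]
    exact hstep
  have hMy : M2 *ᵥ toPi yb = (-η) • (toPi b - η • (B *ᵥ toPi a)) := by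
    have hstep : toPi yb - (η ^ 2) • (B *ᵥ (A *ᵥ toPi yb))
        = (-η) • (toPi b - η • (B *ᵥ toPi a)) := by
      nth_rewrite 1 [hsub2]
      module
    rw [hM2, Matrix.sub_mulVec, Matrix.one_mulVec, Matrix.smul_mulVec,
      ← Matrix.mulVec_mulVec]
    exact hstep
  have hxT : xb = toEucl (-(η • (M1⁻¹ *ᵥ (a - η • toEucl (A *ᵥ b))))) := by
    apply WithLp.ofLp_injective 2
    show toPi xb = -(η • (M1⁻¹ *ᵥ (toPi a - η • (A *ᵥ toPi b))))
    have hinv : M1⁻¹ *ᵥ (M1 *ᵥ toPi xb) = toPi xb := by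
      rw [Matrix.mulVec_mulVec, Matrix.nonsing_inv_mul M1 hdet1, Matrix.one_mulVec]
    rw [← hinv, hMx, Matrix.mulVec_smul]
    module
  have hyT : yb = toEucl (-(η • (M2⁻¹ *ᵥ (b - η • toEucl (B *ᵥ a))))) := by
    apply WithLp.ofLp_injective 2
    show toPi yb = -(η • (M2⁻¹ *ᵥ (toPi b - η • (B *ᵥ toPi a))))
    have hinv : M2⁻¹ *ᵥ (M2 *ᵥ toPi yb) = toPi yb := by
      rw [Matrix.mulVec_mulVec, Matrix.nonsing_inv_mul M2 hdet2, Matrix.one_mulVec]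
    rw [← hinv, hMy, Matrix.mulVec_smul]
    module
  constructor
  · rw [hμd]
    congr 1
    exact hE1.symm.trans hxT
  · rw [hνd]
    congr 1
    exact hE2.symm.trans hyT
end

section
/- Let η>0, a∈ℝ^m, b∈ℝ^n, N an m×n real matrix, and set Ñ=ηN, M̄=ÑÑᵀ, M̃=ÑᵀÑ. The CGD zero-sum update x = −η(Id+M̄)⁻¹(a+Ñb), y = η(Id+M̃)⁻¹(b−Ñᵀa) satisfies the fixed-point relations x = −η(Ny + a) and y = η(Nᵀx + b), and consequently ‖Nᵀx‖² + ‖Ny‖² = −yᵀNᵀa − xᵀNb. -/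
open Matrix

lemma norm_toEucl_sq {k : ℕ} (v : Fin k → ℝ) : ‖toEucl v‖ ^ 2 = v ⬝ᵥ v := by
  rw [← real_inner_self_eq_norm_sq]
  simp only [toEucl, PiLp.inner_apply, PiLp.toLp_apply, dotProduct, RCLike.inner_apply,
    conj_trivial, mul_comm]

/-- the CGD zero-sum update satisfies the fixed-point relations
`x = −η(Ny + a)`, `y = η(Nᵀx + b)`, and hence `‖Nᵀx‖² + ‖Ny‖² = −yᵀNᵀa − xᵀNb`. -/
theorem cgd_fixed_point_relations (m n : ℕ) (η : ℝ) (hη : 0 < η)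
    (a : EuclideanSpace ℝ (Fin m)) (b : EuclideanSpace ℝ (Fin n))
    (N : Matrix (Fin m) (Fin n) ℝ)
    (Ntil : Matrix (Fin m) (Fin n) ℝ) (hNtil : Ntil = η • N)
    (Mbar : Matrix (Fin m) (Fin m) ℝ) (hMbar : Mbar = Ntil * Ntilᵀ)
    (Mtil : Matrix (Fin n) (Fin n) ℝ) (hMtil : Mtil = Ntilᵀ * Ntil)
    (x : EuclideanSpace ℝ (Fin m)) (y : EuclideanSpace ℝ (Fin n))
    (hx : x = -(η • toEucl (((1 + Mbar)⁻¹).mulVec (a + toEucl (Ntil.mulVec b)))))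
    (hy : y = η • toEucl (((1 + Mtil)⁻¹).mulVec (b - toEucl (Ntilᵀ.mulVec a)))) :
    x = -(η • (toEucl (N.mulVec y) + a)) ∧
    y = η • (toEucl (Nᵀ.mulVec x) + b) ∧
    ‖toEucl (Nᵀ.mulVec x)‖ ^ 2 + ‖toEucl (N.mulVec y)‖ ^ 2
      = -(y ⬝ᵥ Nᵀ.mulVec a) - (x ⬝ᵥ N.mulVec b) := by
  have hη0 : η ≠ 0 := hη.ne'
  -- positive definiteness and invertibility
  have hMbarPS : Mbar.PosSemidef := by
    rw [hMbar, ← Matrix.conjTranspose_eq_transpose_of_trivial]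
    exact Matrix.posSemidef_self_mul_conjTranspose Ntil
  have hMtilPS : Mtil.PosSemidef := by
    rw [hMtil, ← Matrix.conjTranspose_eq_transpose_of_trivial]
    exact Matrix.posSemidef_conjTranspose_mul_self Ntil
  have hUbar : IsUnit (1 + Mbar).det :=
    (Matrix.isUnit_iff_isUnit_det _).mp (Matrix.PosDef.add_posSemidef Matrix.PosDef.one hMbarPS).isUnit
  have hUtil : IsUnit (1 + Mtil).det :=
    (Matrix.isUnit_iff_isUnit_det _).mp (Matrix.PosDef.add_posSemidef Matrix.PosDef.one hMtilPS).isUnit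
  -- intertwining identities
  have hswap : (1 + Mbar) * Ntil = Ntil * (1 + Mtil) := by
    rw [hMbar, hMtil, Matrix.add_mul, Matrix.mul_add, Matrix.one_mul, Matrix.mul_one,
      Matrix.mul_assoc]
  have hcomm : Ntil * (1 + Mtil)⁻¹ = (1 + Mbar)⁻¹ * Ntil := by
    have h := congrArg (fun M => (1 + Mbar)⁻¹ * M * (1 + Mtil)⁻¹) hswap
    simpa [Matrix.mul_assoc, Matrix.nonsing_inv_mul_cancel_left _ _ hUbar,
      Matrix.mul_nonsing_inv _ hUtil] using h
  have hswap2 : (1 + Mtil) * Ntilᵀ = Ntilᵀ * (1 + Mbar) := by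
    rw [hMbar, hMtil, Matrix.add_mul, Matrix.mul_add, Matrix.one_mul, Matrix.mul_one,
      Matrix.mul_assoc]
  have hcomm2 : Ntilᵀ * (1 + Mbar)⁻¹ = (1 + Mtil)⁻¹ * Ntilᵀ := by
    have h := congrArg (fun M => (1 + Mtil)⁻¹ * M * (1 + Mbar)⁻¹) hswap2
    simpa [Matrix.mul_assoc, Matrix.nonsing_inv_mul_cancel_left _ _ hUtil,
      Matrix.mul_nonsing_inv _ hUbar] using h
  -- plain-vector copies
  let a' : Fin m → ℝ := a
  let b' : Fin n → ℝ := b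
  let x' : Fin m → ℝ := x
  let y' : Fin n → ℝ := y
  have hx' : x' = -(η • ((1 + Mbar)⁻¹ *ᵥ (a' + Ntil *ᵥ b'))) := congrArg WithLp.ofLp hx
  have hy' : y' = η • ((1 + Mtil)⁻¹ *ᵥ (b' - Ntilᵀ *ᵥ a')) := congrArg WithLp.ofLp hy
  -- first fixed-point relation
  have hNy : Ntil *ᵥ y' = η • ((1 + Mbar)⁻¹ *ᵥ (Ntil *ᵥ b' - Mbar *ᵥ a')) := by
    rw [hy', Matrix.mulVec_smul, Matrix.mulVec_mulVec, hcomm, ← Matrix.mulVec_mulVec,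
      Matrix.mulVec_sub, Matrix.mulVec_mulVec, ← hMbar]
  have ha'' : (1 + Mbar) *ᵥ a' = a' + Mbar *ᵥ a' := by
    rw [Matrix.add_mulVec, Matrix.one_mulVec]
  have hinva : (1 + Mbar)⁻¹ *ᵥ ((1 + Mbar) *ᵥ a') = a' := by
    rw [Matrix.mulVec_mulVec, Matrix.nonsing_inv_mul _ hUbar, Matrix.one_mulVec]
  have rel1 : x' = -(η • (N *ᵥ y' + a')) := by
    have hNy' : N *ᵥ y' = (1 + Mbar)⁻¹ *ᵥ (Ntil *ᵥ b' - Mbar *ᵥ a') := by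
      have : η • (N *ᵥ y') = Ntil *ᵥ y' := by rw [hNtil, Matrix.smul_mulVec]
      have h2 := hNy
      rw [← this] at h2
      exact smul_right_injective _ hη0 h2
    rw [hx', hNy']
    have hinj : Function.Injective ((1 + Mbar).mulVec) :=
      Matrix.mulVec_injective_iff_isUnit.mpr ((Matrix.isUnit_iff_isUnit_det _).mpr hUbar)
    have key : (1 + Mbar)⁻¹ *ᵥ (Ntil *ᵥ b' - Mbar *ᵥ a') + a'
        = (1 + Mbar)⁻¹ *ᵥ (a' + Ntil *ᵥ b') := by
      apply hinj
      show (1 + Mbar) *ᵥ _ = (1 + Mbar) *ᵥ _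
      rw [Matrix.mulVec_add, Matrix.mulVec_mulVec, Matrix.mul_nonsing_inv _ hUbar,
        Matrix.one_mulVec, Matrix.mulVec_mulVec, Matrix.mul_nonsing_inv _ hUbar,
        Matrix.one_mulVec, Matrix.add_mulVec, Matrix.one_mulVec]
      abel
    rw [← key]
  -- second fixed-point relation
  have hNx : Ntilᵀ *ᵥ x' = -(η • ((1 + Mtil)⁻¹ *ᵥ (Ntilᵀ *ᵥ a' + Mtil *ᵥ b'))) := by
    rw [hx', Matrix.mulVec_neg, Matrix.mulVec_smul, Matrix.mulVec_mulVec, hcomm2,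
      ← Matrix.mulVec_mulVec, Matrix.mulVec_add, Matrix.mulVec_mulVec, ← hMtil]
  have hinvb : (1 + Mtil)⁻¹ *ᵥ ((1 + Mtil) *ᵥ b') = b' := by
    rw [Matrix.mulVec_mulVec, Matrix.nonsing_inv_mul _ hUtil, Matrix.one_mulVec]
  have rel2 : y' = η • (Nᵀ *ᵥ x' + b') := by
    have hNx' : Nᵀ *ᵥ x' = -((1 + Mtil)⁻¹ *ᵥ (Ntilᵀ *ᵥ a' + Mtil *ᵥ b')) := by
      have : η • (Nᵀ *ᵥ x') = Ntilᵀ *ᵥ x' := by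
        rw [hNtil, Matrix.transpose_smul, Matrix.smul_mulVec]
      have h2 := hNx
      rw [← this, ← smul_neg] at h2
      exact smul_right_injective _ hη0 h2
    rw [hy', hNx']
    have hinj : Function.Injective ((1 + Mtil).mulVec) :=
      Matrix.mulVec_injective_iff_isUnit.mpr ((Matrix.isUnit_iff_isUnit_det _).mpr hUtil)
    have key : -((1 + Mtil)⁻¹ *ᵥ (Ntilᵀ *ᵥ a' + Mtil *ᵥ b')) + b'
        = (1 + Mtil)⁻¹ *ᵥ (b' - Ntilᵀ *ᵥ a') := by
      apply hinj
      show (1 + Mtil) *ᵥ _ = (1 + Mtil) *ᵥ _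
      rw [Matrix.mulVec_add, Matrix.mulVec_neg, Matrix.mulVec_mulVec,
        Matrix.mul_nonsing_inv _ hUtil, Matrix.one_mulVec, Matrix.mulVec_mulVec,
        Matrix.mul_nonsing_inv _ hUtil, Matrix.one_mulVec, Matrix.add_mulVec,
        Matrix.one_mulVec]
      abel
    rw [← key]
  -- norm identity
  refine ⟨WithLp.ofLp_injective 2 rel1, WithLp.ofLp_injective 2 rel2, ?_⟩
  set u : Fin n → ℝ := Nᵀ *ᵥ x' with hu
  set v : Fin m → ℝ := N *ᵥ y' with hv
  have h1 : v = η⁻¹ • (-x') - a' := by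
    have : η • (v + a') = -x' := by rw [← neg_eq_iff_eq_neg]; exact rel1.symm
    rw [eq_sub_iff_add_eq, ← this, smul_smul, inv_mul_cancel₀ hη0, one_smul]
  have h2 : u = η⁻¹ • y' - b' := by
    rw [eq_sub_iff_add_eq, rel2, smul_smul, inv_mul_cancel₀ hη0, one_smul]
  have hxy : x' ⬝ᵥ v = u ⬝ᵥ y' := by
    rw [hu, hv, dotProduct_mulVec, ← Matrix.mulVec_transpose, dotProduct_comm]
  have e1 : u ⬝ᵥ u = η⁻¹ * (u ⬝ᵥ y') - u ⬝ᵥ b' := by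
    nth_rewrite 2 [h2]
    rw [dotProduct_sub, dotProduct_smul, smul_eq_mul]
  have e2 : v ⬝ᵥ v = -(η⁻¹ * (u ⬝ᵥ y')) - v ⬝ᵥ a' := by
    nth_rewrite 2 [h1]
    rw [dotProduct_sub, dotProduct_smul, smul_eq_mul, dotProduct_neg,
      ← dotProduct_comm, hxy, mul_neg]
  have eR1 : (y' : Fin n → ℝ) ⬝ᵥ (Nᵀ *ᵥ a') = v ⬝ᵥ a' := by
    rw [dotProduct_mulVec, Matrix.vecMul_transpose, hv]
  have eR2 : (x' : Fin m → ℝ) ⬝ᵥ (N *ᵥ b') = u ⬝ᵥ b' := by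
    rw [dotProduct_mulVec, ← Matrix.mulVec_transpose, hu]
  show ‖toEucl (Nᵀ *ᵥ x')‖ ^ 2 + ‖toEucl (N *ᵥ y')‖ ^ 2
      = -(y' ⬝ᵥ Nᵀ *ᵥ a') - (x' ⬝ᵥ N *ᵥ b')
  rw [norm_toEucl_sq, norm_toEucl_sq, ← hu, ← hv, e1, e2, eR1, eR2]
  ring
end

section
/- Let η>0, a∈ℝ^m, b∈ℝ^n, N an m×n real matrix, and set Ñ=ηN, M̄=ÑÑᵀ, M̃=ÑᵀÑ. The CGD zero-sum update x = −η(Id+M̄)⁻¹(a+Ñb), y = η(Id+M̃)⁻¹(b−Ñᵀa) satisfies xᵀNb + aᵀNy = −aᵀ(Id+M̄)⁻¹M̄ a − bᵀ(Id+M̃)⁻¹M̃ b. -/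
open Matrix

private lemma dp_mulVec {k l : ℕ} (M : Matrix (Fin k) (Fin l) ℝ)
    (u : Fin k → ℝ) (v : Fin l → ℝ) :
    (Mᵀ *ᵥ u) ⬝ᵥ v = u ⬝ᵥ (M *ᵥ v) := by
  rw [dotProduct_mulVec, mulVec_transpose]

private lemma dp_mulVec' {k l : ℕ} (M : Matrix (Fin k) (Fin l) ℝ)
    (u : Fin l → ℝ) (v : Fin k → ℝ) :
    (M *ᵥ u) ⬝ᵥ v = u ⬝ᵥ (Mᵀ *ᵥ v) := by
  have := dp_mulVec Mᵀ u v
  rwa [Matrix.transpose_transpose] at this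

/-- the CGD zero-sum update satisfies
`xᵀNb + aᵀNy = −aᵀ(Id+M̄)⁻¹M̄ a − bᵀ(Id+M̃)⁻¹M̃ b`. -/
theorem cgd_cross_term_identity (m n : ℕ) (η : ℝ) (hη : 0 < η)
    (a : EuclideanSpace ℝ (Fin m)) (b : EuclideanSpace ℝ (Fin n))
    (N : Matrix (Fin m) (Fin n) ℝ)
    (Ntil : Matrix (Fin m) (Fin n) ℝ) (hNtil : Ntil = η • N)
    (Mbar : Matrix (Fin m) (Fin m) ℝ) (hMbar : Mbar = Ntil * Ntilᵀ)
    (Mtil : Matrix (Fin n) (Fin n) ℝ) (hMtil : Mtil = Ntilᵀ * Ntil)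
    (x : EuclideanSpace ℝ (Fin m)) (y : EuclideanSpace ℝ (Fin n))
    (hx : x = -(η • toEucl (((1 + Mbar)⁻¹).mulVec (a + toEucl (Ntil.mulVec b)))))
    (hy : y = η • toEucl (((1 + Mtil)⁻¹).mulVec (b - toEucl (Ntilᵀ.mulVec a)))) :
    (x ⬝ᵥ N.mulVec b) + (a ⬝ᵥ N.mulVec y)
      = -(a ⬝ᵥ ((1 + Mbar)⁻¹ * Mbar).mulVec a)
        - (b ⬝ᵥ ((1 + Mtil)⁻¹ * Mtil).mulVec b) := by
  set A := (1 + Mbar)⁻¹ with hA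
  set B := (1 + Mtil)⁻¹ with hB
  -- positive definiteness / invertibility
  have hPD1 : (1 + Mbar).PosDef := by
    rw [hMbar]
    exact Matrix.PosDef.add_posSemidef Matrix.PosDef.one
      (by simpa using Matrix.posSemidef_self_mul_conjTranspose Ntil)
  have hPD2 : (1 + Mtil).PosDef := by
    rw [hMtil]
    exact Matrix.PosDef.add_posSemidef Matrix.PosDef.one
      (by simpa using Matrix.posSemidef_conjTranspose_mul_self Ntil)
  have hU1 : IsUnit (1 + Mbar).det := hPD1.det_pos.ne'.isUnit
  have hU2 : IsUnit (1 + Mtil).det := hPD2.det_pos.ne'.isUnit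
  -- symmetry of the inverses
  have hMbarSym : (1 + Mbar)ᵀ = 1 + Mbar := by
    rw [hMbar]; simp [Matrix.transpose_add, Matrix.transpose_mul]
  have hMtilSym : (1 + Mtil)ᵀ = 1 + Mtil := by
    rw [hMtil]; simp [Matrix.transpose_add, Matrix.transpose_mul]
  have hAsym : Aᵀ = A := by rw [hA, Matrix.transpose_nonsing_inv, hMbarSym]
  have hBsym : Bᵀ = B := by rw [hB, Matrix.transpose_nonsing_inv, hMtilSym]
  -- key intertwining identity
  have hkey : (1 + Mbar) * Ntil = Ntil * (1 + Mtil) := by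
    rw [hMbar, hMtil, Matrix.add_mul, Matrix.mul_add, Matrix.one_mul, Matrix.mul_one,
      Matrix.mul_assoc]
  have hAN : A * Ntil = Ntil * B := by
    calc A * Ntil = A * Ntil * ((1 + Mtil) * B) := by
          rw [Matrix.mul_nonsing_inv _ hU2, Matrix.mul_one]
      _ = A * (Ntil * (1 + Mtil)) * B := by
          rw [← Matrix.mul_assoc, Matrix.mul_assoc A]
      _ = A * ((1 + Mbar) * Ntil) * B := by rw [hkey]
      _ = A * (1 + Mbar) * Ntil * B := by rw [← Matrix.mul_assoc A]
      _ = Ntil * B := by rw [Matrix.nonsing_inv_mul _ hU1, Matrix.one_mul]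
  have hNA : Ntilᵀ * A = B * Ntilᵀ := by
    have := congrArg Matrix.transpose hAN
    rwa [Matrix.transpose_mul, Matrix.transpose_mul, hAsym, hBsym] at this
  have hAM : A * Mbar = Ntil * B * Ntilᵀ := by
    rw [hMbar, ← Matrix.mul_assoc, hAN]
  have hBM : Ntilᵀ * (A * Ntil) = B * Mtil := by
    rw [← Matrix.mul_assoc, hNA, Matrix.mul_assoc, ← hMtil]
  -- unfold the update
  subst hx hy hNtil
  show (-(η • (A *ᵥ ((fun i => a i) + (η • N) *ᵥ (fun j => b j))))) ⬝ᵥ (N *ᵥ (fun j => b j))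
      + (fun i => a i) ⬝ᵥ (N *ᵥ (η • (B *ᵥ ((fun j => b j) - (η • N)ᵀ *ᵥ (fun i => a i)))))
      = -((fun i => a i) ⬝ᵥ (A * Mbar) *ᵥ (fun i => a i))
        - (fun j => b j) ⬝ᵥ (B * Mtil) *ᵥ (fun j => b j)
  set Nt := η • N with hNt
  set a' : Fin m → ℝ := fun i => a i with ha'
  set b' : Fin n → ℝ := fun j => b j with hb'
  have e1 : (-(η • (A *ᵥ (a' + Nt *ᵥ b')))) ⬝ᵥ (N *ᵥ b')
      = -((A *ᵥ (a' + Nt *ᵥ b')) ⬝ᵥ (Nt *ᵥ b')) := by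
    rw [neg_dotProduct, smul_dotProduct, hNt, Matrix.smul_mulVec,
      dotProduct_smul]
  have e2 : a' ⬝ᵥ (N *ᵥ (η • (B *ᵥ (b' - Ntᵀ *ᵥ a'))))
      = a' ⬝ᵥ (Nt *ᵥ (B *ᵥ (b' - Ntᵀ *ᵥ a'))) := by
    rw [Matrix.mulVec_smul, hNt, Matrix.smul_mulVec]
  rw [e1, e2]
  have hAa : (A *ᵥ (a' + Nt *ᵥ b')) ⬝ᵥ (Nt *ᵥ b')
      = a' ⬝ᵥ ((A * Nt) *ᵥ b') + b' ⬝ᵥ ((Ntᵀ * (A * Nt)) *ᵥ b') := by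
    conv_lhs => rw [← hAsym]
    rw [dp_mulVec, add_dotProduct, Matrix.mulVec_mulVec, dp_mulVec' Nt,
      Matrix.mulVec_mulVec]
  have hBb : a' ⬝ᵥ (Nt *ᵥ (B *ᵥ (b' - Ntᵀ *ᵥ a')))
      = a' ⬝ᵥ ((Nt * B) *ᵥ b') - a' ⬝ᵥ ((Nt * B * Ntᵀ) *ᵥ a') := by
    rw [Matrix.mulVec_mulVec, Matrix.mulVec_sub, dotProduct_sub,
      Matrix.mulVec_mulVec]
  rw [hAa, hBb, hBM, hAN, ← hAM]
  ring
end

section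
/- Let η>0, a∈ℝ^m, b∈ℝ^n, N an m×n real matrix, and set Ñ=ηN, M̄=ÑÑᵀ, M̃=ÑᵀÑ. The CGD zero-sum update x = −η(Id+M̄)⁻¹(a+Ñb), y = η(Id+M̃)⁻¹(b−Ñᵀa) satisfies ‖Nᵀx‖² + ‖Ny‖² = aᵀ(Id+M̄)⁻¹M̄ a + bᵀ(Id+M̃)⁻¹M̃ b. -/
open Matrix

lemma dot_comm_mulVec {p q : ℕ} (w : Fin p → ℝ) (M : Matrix (Fin p) (Fin q) ℝ) (z : Fin q → ℝ) :
    w ⬝ᵥ M.mulVec z = z ⬝ᵥ Mᵀ.mulVec w := by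
  rw [dotProduct_mulVec, ← mulVec_transpose, dotProduct_comm]

lemma dot_self_mulVec {p q : ℕ} (C : Matrix (Fin p) (Fin q) ℝ) (u : Fin q → ℝ) :
    (C.mulVec u) ⬝ᵥ (C.mulVec u) = u ⬝ᵥ ((Cᵀ * C).mulVec u) := by
  rw [← mulVec_mulVec, dot_comm_mulVec]

lemma inv_intertwine {p q : ℕ} (P : Matrix (Fin p) (Fin p) ℝ) (Q : Matrix (Fin q) (Fin q) ℝ)
    (X : Matrix (Fin p) (Fin q) ℝ) (hP : IsUnit P.det) (hQ : IsUnit Q.det)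
    (h : P * X = X * Q) : P⁻¹ * X = X * Q⁻¹ := by
  calc P⁻¹ * X = P⁻¹ * (X * Q) * Q⁻¹ := by
        rw [Matrix.mul_assoc, Matrix.mul_assoc, Matrix.mul_nonsing_inv Q hQ, Matrix.mul_one]
    _ = P⁻¹ * (P * X) * Q⁻¹ := by rw [h]
    _ = X * Q⁻¹ := by rw [← Matrix.mul_assoc, Matrix.nonsing_inv_mul P hP, Matrix.one_mul]

lemma expand_quad_add {p : ℕ} (S : Matrix (Fin p) (Fin p) ℝ) (hS : Sᵀ = S)
    (a w : Fin p → ℝ) :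
    (a + w) ⬝ᵥ S.mulVec (a + w)
      = a ⬝ᵥ S.mulVec a + 2 * (a ⬝ᵥ S.mulVec w) + w ⬝ᵥ S.mulVec w := by
  have h := dot_comm_mulVec w S a
  rw [hS] at h
  simp only [mulVec_add, dotProduct_add, add_dotProduct]
  rw [h]; ring

lemma expand_quad_sub {p : ℕ} (S : Matrix (Fin p) (Fin p) ℝ) (hS : Sᵀ = S)
    (a w : Fin p → ℝ) :
    (a - w) ⬝ᵥ S.mulVec (a - w)
      = a ⬝ᵥ S.mulVec a - 2 * (a ⬝ᵥ S.mulVec w) + w ⬝ᵥ S.mulVec w := by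
  have h := dot_comm_mulVec w S a
  rw [hS] at h
  simp only [mulVec_sub, dotProduct_sub, sub_dotProduct]
  rw [h]; ring

/-- the CGD zero-sum update satisfies
`‖Nᵀx‖² + ‖Ny‖² = aᵀ(Id+M̄)⁻¹M̄ a + bᵀ(Id+M̃)⁻¹M̃ b`. -/
theorem cgd_interaction_norm_identity (m n : ℕ) (η : ℝ) (hη : 0 < η)
    (a : EuclideanSpace ℝ (Fin m)) (b : EuclideanSpace ℝ (Fin n))
    (N : Matrix (Fin m) (Fin n) ℝ)
    (Ntil : Matrix (Fin m) (Fin n) ℝ) (hNtil : Ntil = η • N)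
    (Mbar : Matrix (Fin m) (Fin m) ℝ) (hMbar : Mbar = Ntil * Ntilᵀ)
    (Mtil : Matrix (Fin n) (Fin n) ℝ) (hMtil : Mtil = Ntilᵀ * Ntil)
    (x : EuclideanSpace ℝ (Fin m)) (y : EuclideanSpace ℝ (Fin n))
    (hx : x = -(η • toEucl (((1 + Mbar)⁻¹).mulVec (a + toEucl (Ntil.mulVec b)))))
    (hy : y = η • toEucl (((1 + Mtil)⁻¹).mulVec (b - toEucl (Ntilᵀ.mulVec a)))) :
    ‖toEucl (Nᵀ.mulVec x)‖ ^ 2 + ‖toEucl (N.mulVec y)‖ ^ 2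
      = (a ⬝ᵥ ((1 + Mbar)⁻¹ * Mbar).mulVec a)
        + (b ⬝ᵥ ((1 + Mtil)⁻¹ * Mtil).mulVec b) := by
  set A : Matrix (Fin m) (Fin m) ℝ := (1 + Mbar)⁻¹ with hA
  set B : Matrix (Fin n) (Fin n) ℝ := (1 + Mtil)⁻¹ with hB
  have hUbar : IsUnit (1 + Mbar).det := by
    rw [hMbar]
    have h1 : (Ntil * Ntilᵀ).PosSemidef := by
      simpa using Matrix.posSemidef_self_mul_conjTranspose Ntil
    exact ((Matrix.PosDef.add_posSemidef Matrix.PosDef.one h1)).isUnit.map Matrix.detMonoidHom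
  have hUtil : IsUnit (1 + Mtil).det := by
    rw [hMtil]
    have h1 : (Ntilᵀ * Ntil).PosSemidef := by
      simpa using Matrix.posSemidef_conjTranspose_mul_self Ntil
    exact ((Matrix.PosDef.add_posSemidef Matrix.PosDef.one h1)).isUnit.map Matrix.detMonoidHom
  have hMbarT : Mbarᵀ = Mbar := by rw [hMbar]; simp [transpose_mul]
  have hMtilT : Mtilᵀ = Mtil := by rw [hMtil]; simp [transpose_mul]
  have hAT : Aᵀ = A := by
    rw [hA, transpose_nonsing_inv, transpose_add, transpose_one, hMbarT]
  have hBT : Bᵀ = B := by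
    rw [hB, transpose_nonsing_inv, transpose_add, transpose_one, hMtilT]
  have hAN : A * Ntil = Ntil * B := by
    refine inv_intertwine _ _ _ hUbar hUtil ?_
    rw [hMbar, hMtil]
    simp [Matrix.add_mul, Matrix.mul_add, Matrix.mul_assoc]
  have hBN : B * Ntilᵀ = Ntilᵀ * A := by
    refine inv_intertwine _ _ _ hUtil hUbar ?_
    rw [hMbar, hMtil]
    simp [Matrix.add_mul, Matrix.mul_add, Matrix.mul_assoc]
  set S : Matrix (Fin m) (Fin m) ℝ := A * Mbar * A with hS
  set T : Matrix (Fin n) (Fin n) ℝ := B * Mtil * B with hT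
  have hST : Sᵀ = S := by
    rw [hS]; simp only [transpose_mul, hAT, hMbarT]; rw [Matrix.mul_assoc]
  have hTT : Tᵀ = T := by
    rw [hT]; simp only [transpose_mul, hBT, hMtilT]; rw [Matrix.mul_assoc]
  have hMN : Mbar * (Ntil * B) = Ntil * (Mtil * B) := by
    rw [hMbar, hMtil]; simp [Matrix.mul_assoc]
  have MI1 : S * Ntil = Ntil * T := by
    rw [hS, hT]
    calc A * Mbar * A * Ntil = A * (Mbar * (A * Ntil)) := by
          simp only [Matrix.mul_assoc]
      _ = A * (Mbar * (Ntil * B)) := by rw [hAN]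
      _ = A * (Ntil * (Mtil * B)) := by rw [hMN]
      _ = (A * Ntil) * (Mtil * B) := by rw [Matrix.mul_assoc]
      _ = Ntil * B * (Mtil * B) := by rw [hAN]
      _ = Ntil * (B * Mtil * B) := by simp only [Matrix.mul_assoc]
  have hNMN : Ntil * (Mtil * Ntilᵀ) = Mbar * Mbar := by
    rw [hMbar, hMtil]; simp [Matrix.mul_assoc]
  have hNMN' : Ntilᵀ * (Mbar * Ntil) = Mtil * Mtil := by
    rw [hMbar, hMtil]; simp [Matrix.mul_assoc]
  have hinvA : (1 + Mbar) * A = 1 := Matrix.mul_nonsing_inv _ hUbar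
  have hinvB : (1 + Mtil) * B = 1 := Matrix.mul_nonsing_inv _ hUtil
  have MI2 : S + Ntil * (T * Ntilᵀ) = A * Mbar := by
    have h1 : Ntil * (T * Ntilᵀ) = A * (Mbar * Mbar) * A := by
      rw [hT]
      calc Ntil * (B * Mtil * B * Ntilᵀ)
          = (A * Ntil) * (Mtil * (B * Ntilᵀ)) := by
            rw [hAN]; simp only [Matrix.mul_assoc]
        _ = (A * Ntil) * (Mtil * (Ntilᵀ * A)) := by rw [hBN]
        _ = A * ((Ntil * (Mtil * Ntilᵀ)) * A) := by simp only [Matrix.mul_assoc]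
        _ = A * ((Mbar * Mbar) * A) := by rw [hNMN]
        _ = A * (Mbar * Mbar) * A := by rw [Matrix.mul_assoc A (Mbar * Mbar) A]
    rw [h1, hS]
    calc A * Mbar * A + A * (Mbar * Mbar) * A
        = A * (Mbar * ((1 + Mbar) * A)) := by noncomm_ring
      _ = A * Mbar := by rw [hinvA, Matrix.mul_one]
  have hMN' : Mtil * (Ntilᵀ * A) = Ntilᵀ * (Mbar * A) := by
    rw [hMbar, hMtil]; simp [Matrix.mul_assoc]
  have MI3 : T + Ntilᵀ * (S * Ntil) = B * Mtil := by
    have h1 : Ntilᵀ * (S * Ntil) = B * (Mtil * Mtil) * B := by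
      rw [hS]
      calc Ntilᵀ * (A * Mbar * A * Ntil)
          = (B * Ntilᵀ) * (Mbar * (A * Ntil)) := by
            rw [hBN]; simp only [Matrix.mul_assoc]
        _ = (B * Ntilᵀ) * (Mbar * (Ntil * B)) := by rw [hAN]
        _ = B * ((Ntilᵀ * (Mbar * Ntil)) * B) := by simp only [Matrix.mul_assoc]
        _ = B * ((Mtil * Mtil) * B) := by rw [hNMN']
        _ = B * (Mtil * Mtil) * B := by rw [Matrix.mul_assoc B (Mtil * Mtil) B]
    rw [h1, hT]
    calc B * Mtil * B + B * (Mtil * Mtil) * B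
        = B * (Mtil * ((1 + Mtil) * B)) := by noncomm_ring
      _ = B * Mtil := by rw [hinvB, Matrix.mul_one]
  -- analytic part
  have hNx : Nᵀ.mulVec x = -(Ntilᵀ.mulVec (A.mulVec ((show Fin m → ℝ from a) + Ntil.mulVec b))) := by
    funext i
    rw [hx]
    simp only [mulVec, dotProduct, transpose_apply, PiLp.neg_apply, PiLp.smul_apply,
      smul_eq_mul, toEucl, WithLp.ofLp_toLp, PiLp.add_apply, Pi.neg_apply, Pi.add_apply, hNtil,
      Matrix.smul_apply, mul_neg, neg_mul, mul_add, Finset.sum_neg_distrib, neg_inj]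
    exact Finset.sum_congr rfl fun j _ => by ring
  have hNy : N.mulVec y = Ntil.mulVec (B.mulVec ((show Fin n → ℝ from b) - Ntilᵀ.mulVec a)) := by
    funext i
    rw [hy]
    simp only [mulVec, dotProduct, transpose_apply, PiLp.smul_apply, smul_eq_mul, toEucl, WithLp.ofLp_toLp,
      PiLp.sub_apply, Pi.sub_apply, hNtil, Matrix.smul_apply, mul_sub]
    exact Finset.sum_congr rfl fun j _ => by ring
  rw [norm_toEucl_sq, norm_toEucl_sq, hNx, hNy]
  simp only [neg_dotProduct, dotProduct_neg, neg_neg]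
  rw [mulVec_mulVec, mulVec_mulVec, dot_self_mulVec, dot_self_mulVec]
  have hC1 : (Ntilᵀ * A)ᵀ * (Ntilᵀ * A) = S := by
    rw [transpose_mul, transpose_transpose, hAT, hS, hMbar]
    simp only [Matrix.mul_assoc]
  have hC2 : (Ntil * B)ᵀ * (Ntil * B) = T := by
    rw [transpose_mul, hBT, hT, hMtil]
    simp only [Matrix.mul_assoc]
  rw [hC1, hC2, expand_quad_add S hST, expand_quad_sub T hTT]
  have f1 : a ⬝ᵥ S.mulVec (Ntil.mulVec b) = a ⬝ᵥ (S * Ntil).mulVec b := by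
    rw [mulVec_mulVec]
  have f2 : b ⬝ᵥ T.mulVec (Ntilᵀ.mulVec a) = a ⬝ᵥ (Ntil * T).mulVec b := by
    rw [mulVec_mulVec, dot_comm_mulVec, transpose_mul, transpose_transpose, hTT]
  have f3 : (Ntil.mulVec b) ⬝ᵥ S.mulVec (Ntil.mulVec b)
      = b ⬝ᵥ (Ntilᵀ * (S * Ntil)).mulVec b := by
    rw [mulVec_mulVec, dot_comm_mulVec, transpose_mul, hST, mulVec_mulVec, Matrix.mul_assoc]
  have f4 : (Ntilᵀ.mulVec a) ⬝ᵥ T.mulVec (Ntilᵀ.mulVec a)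
      = a ⬝ᵥ (Ntil * (T * Ntilᵀ)).mulVec a := by
    rw [mulVec_mulVec, dot_comm_mulVec, transpose_mul, transpose_transpose, hTT,
      mulVec_mulVec, Matrix.mul_assoc]
  rw [f1, f2, f3, f4]
  have g1 : a ⬝ᵥ (S * Ntil).mulVec b = a ⬝ᵥ (Ntil * T).mulVec b := by rw [MI1]
  have g2 : a ⬝ᵥ S.mulVec a + a ⬝ᵥ (Ntil * (T * Ntilᵀ)).mulVec a
      = a ⬝ᵥ (A * Mbar).mulVec a := by
    rw [← dotProduct_add, ← Matrix.add_mulVec, MI2]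
  have g3 : b ⬝ᵥ T.mulVec b + b ⬝ᵥ (Ntilᵀ * (S * Ntil)).mulVec b
      = b ⬝ᵥ (B * Mtil).mulVec b := by
    rw [← dotProduct_add, ← Matrix.add_mulVec, MI3]
  linarith [g1, g2, g3]
end

section
/- Let Ñ be an m×n real matrix and set M̄=ÑÑᵀ, M̃=ÑᵀÑ. Then the operator norms satisfy ‖(Id+M̄)⁻¹‖ ≤ 1 and ‖(Id+M̄)⁻¹Ñ‖ ≤ 1/2. Consequently, for η>0, a∈ℝ^m, b∈ℝ^n with Ñ=ηN, the CGD zero-sum update x = −η(Id+M̄)⁻¹(a+Ñb), y = η(Id+M̃)⁻¹(b−Ñᵀa) satisfies ‖x‖ ≤ η(‖a‖ + ‖b‖/2), ‖y‖ ≤ η(‖b‖ + ‖a‖/2), and hence ‖x‖ + ‖y‖ ≤ 2η(‖a‖ + ‖b‖). -/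
open Matrix

/-- The continuous linear map on Euclidean space induced by a matrix
(so that `‖matCLM A‖` is the operator norm of `A`). -/
noncomputable def matCLM {p q : Type*} [Fintype p] [Fintype q] [DecidableEq q]
    (A : Matrix p q ℝ) : EuclideanSpace ℝ q →L[ℝ] EuclideanSpace ℝ p :=
  LinearMap.toContinuousLinearMap (Matrix.toEuclideanLin A)

lemma matCLM_apply {p q : ℕ} (A : Matrix (Fin p) (Fin q) ℝ) (v : EuclideanSpace ℝ (Fin q)) :
    matCLM A v = toEucl (A *ᵥ v) := rfl

lemma inner_toEucl {k : ℕ} (u v : Fin k → ℝ) :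
    inner ℝ (toEucl u) (toEucl v) = u ⬝ᵥ v := by
  simp [toEucl, PiLp.inner_apply, dotProduct, RCLike.inner_apply, mul_comm]

lemma dot_self_eq {k : ℕ} (v : Fin k → ℝ) : v ⬝ᵥ v = ‖toEucl v‖ ^ 2 := by
  rw [← inner_toEucl, real_inner_self_eq_norm_sq]

lemma onePlus_posDef {p q : ℕ} (Nt : Matrix (Fin p) (Fin q) ℝ) :
    (1 + Nt * Ntᵀ).PosDef := by
  have h : (Nt * Ntᵀ).PosSemidef := by
    simpa [conjTranspose_eq_transpose_of_trivial] using Nt.posSemidef_self_mul_conjTranspose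
  exact Matrix.PosDef.add_posSemidef Matrix.PosDef.one h

lemma dot_aux {p q : ℕ} (M : Matrix (Fin p) (Fin q) ℝ) (w : Fin q → ℝ) (x : Fin p → ℝ) :
    (M *ᵥ w) ⬝ᵥ x = w ⬝ᵥ (Mᵀ *ᵥ x) := by
  rw [dotProduct_comm, Matrix.dotProduct_mulVec, ← Matrix.mulVec_transpose,
    dotProduct_comm]

lemma key_dot {p q : ℕ} (Nt : Matrix (Fin p) (Fin q) ℝ) (v : Fin p → ℝ) :
    ((1 + Nt * Ntᵀ) *ᵥ v) ⬝ᵥ v = ‖toEucl v‖ ^ 2 + ‖toEucl (Ntᵀ *ᵥ v)‖ ^ 2 := by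
  rw [Matrix.add_mulVec, Matrix.one_mulVec, add_dotProduct, ← Matrix.mulVec_mulVec,
    dot_aux, dot_self_eq, dot_self_eq]

lemma inv_cancel {p q : ℕ} (Nt : Matrix (Fin p) (Fin q) ℝ) (u : Fin p → ℝ) :
    (1 + Nt * Ntᵀ) *ᵥ (((1 + Nt * Ntᵀ)⁻¹) *ᵥ u) = u := by
  rw [Matrix.mulVec_mulVec, Matrix.mul_nonsing_inv _
    ((Matrix.isUnit_iff_isUnit_det _).mp (onePlus_posDef Nt).isUnit), Matrix.one_mulVec]

lemma bound1 {p q : ℕ} (Nt : Matrix (Fin p) (Fin q) ℝ) (u : Fin p → ℝ) :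
    ‖toEucl (((1 + Nt * Ntᵀ)⁻¹) *ᵥ u)‖ ≤ ‖toEucl u‖ := by
  set v := ((1 + Nt * Ntᵀ)⁻¹) *ᵥ u with hv
  have h := key_dot Nt v
  rw [inv_cancel Nt u] at h
  have h1 : u ⬝ᵥ v ≤ ‖toEucl u‖ * ‖toEucl v‖ := by
    rw [← inner_toEucl]; exact real_inner_le_norm _ _
  nlinarith [norm_nonneg (toEucl v), norm_nonneg (toEucl u),
    norm_nonneg (toEucl (Ntᵀ *ᵥ v)), sq_nonneg (‖toEucl (Ntᵀ *ᵥ v)‖)]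

lemma bound2 {p q : ℕ} (Nt : Matrix (Fin p) (Fin q) ℝ) (w : Fin q → ℝ) :
    ‖toEucl (((1 + Nt * Ntᵀ)⁻¹) *ᵥ (Nt *ᵥ w))‖ ≤ ‖toEucl w‖ / 2 := by
  set v := ((1 + Nt * Ntᵀ)⁻¹) *ᵥ (Nt *ᵥ w) with hv
  have h := key_dot Nt v
  rw [inv_cancel Nt (Nt *ᵥ w), dot_aux] at h
  have h2 : w ⬝ᵥ (Ntᵀ *ᵥ v) ≤ ‖toEucl w‖ * ‖toEucl (Ntᵀ *ᵥ v)‖ := by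
    rw [← inner_toEucl]; exact real_inner_le_norm _ _
  nlinarith [norm_nonneg (toEucl v), norm_nonneg (toEucl w),
    norm_nonneg (toEucl (Ntᵀ *ᵥ v)),
    sq_nonneg (‖toEucl w‖ - 2 * ‖toEucl (Ntᵀ *ᵥ v)‖)]

lemma toEucl_mulVec_add {p q : ℕ} (B : Matrix (Fin p) (Fin q) ℝ)
    (u v : EuclideanSpace ℝ (Fin q)) :
    toEucl (B *ᵥ (u + v)) = toEucl (B *ᵥ u) + toEucl (B *ᵥ v) := by
  ext i
  simp [toEucl, Matrix.mulVec, dotProduct, PiLp.add_apply, mul_add,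
    Finset.sum_add_distrib]

lemma toEucl_mulVec_sub {p q : ℕ} (B : Matrix (Fin p) (Fin q) ℝ)
    (u v : EuclideanSpace ℝ (Fin q)) :
    toEucl (B *ᵥ (u - v)) = toEucl (B *ᵥ u) - toEucl (B *ᵥ v) := by
  ext i
  simp [toEucl, Matrix.mulVec, dotProduct, PiLp.sub_apply, mul_sub,
    Finset.sum_sub_distrib]

/-- `‖(Id+M̄)⁻¹‖ ≤ 1`, `‖(Id+M̄)⁻¹Ñ‖ ≤ 1/2`, and the resulting bounds
on the size of the CGD zero-sum update. -/
theorem cgd_update_size_bounds (m n : ℕ) (η : ℝ) (hη : 0 < η)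
    (N : Matrix (Fin m) (Fin n) ℝ)
    (a : EuclideanSpace ℝ (Fin m)) (b : EuclideanSpace ℝ (Fin n))
    (Ntil : Matrix (Fin m) (Fin n) ℝ) (hNtil : Ntil = η • N)
    (Mbar : Matrix (Fin m) (Fin m) ℝ) (hMbar : Mbar = Ntil * Ntilᵀ)
    (Mtil : Matrix (Fin n) (Fin n) ℝ) (hMtil : Mtil = Ntilᵀ * Ntil)
    (x : EuclideanSpace ℝ (Fin m)) (y : EuclideanSpace ℝ (Fin n))
    (hx : x = -(η • toEucl (((1 + Mbar)⁻¹).mulVec (a + toEucl (Ntil.mulVec b)))))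
    (hy : y = η • toEucl (((1 + Mtil)⁻¹).mulVec (b - toEucl (Ntilᵀ.mulVec a)))) :
    ‖matCLM ((1 + Mbar)⁻¹)‖ ≤ 1 ∧
    ‖matCLM ((1 + Mbar)⁻¹ * Ntil)‖ ≤ 1 / 2 ∧
    ‖x‖ ≤ η * (‖a‖ + ‖b‖ / 2) ∧
    ‖y‖ ≤ η * (‖b‖ + ‖a‖ / 2) ∧
    ‖x‖ + ‖y‖ ≤ 2 * η * (‖a‖ + ‖b‖) := by
  subst hMbar hMtil
  have hMt : (1 : Matrix (Fin n) (Fin n) ℝ) + Ntilᵀ * Ntil = 1 + Ntilᵀ * (Ntilᵀ)ᵀ := by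
    rw [Matrix.transpose_transpose]
  have hop1 : ‖matCLM ((1 + Ntil * Ntilᵀ)⁻¹)‖ ≤ 1 := by
    refine ContinuousLinearMap.opNorm_le_bound _ zero_le_one fun v => ?_
    rw [matCLM_apply, one_mul]
    exact bound1 Ntil v
  have hop2 : ‖matCLM ((1 + Ntil * Ntilᵀ)⁻¹ * Ntil)‖ ≤ 1 / 2 := by
    refine ContinuousLinearMap.opNorm_le_bound _ (by norm_num) fun v => ?_
    rw [matCLM_apply, ← Matrix.mulVec_mulVec]
    calc ‖toEucl ((1 + Ntil * Ntilᵀ)⁻¹ *ᵥ (Ntil *ᵥ v))‖ ≤ ‖toEucl (v : Fin n → ℝ)‖ / 2 :=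
          bound2 Ntil v
      _ = 1 / 2 * ‖v‖ := by rw [show toEucl (v : Fin n → ℝ) = v from rfl]; ring
  have hxb : ‖x‖ ≤ η * (‖a‖ + ‖b‖ / 2) := by
    rw [hx, norm_neg, norm_smul, Real.norm_eq_abs, abs_of_pos hη]
    refine mul_le_mul_of_nonneg_left ?_ hη.le
    rw [toEucl_mulVec_add]
    refine le_trans (norm_add_le _ _) (add_le_add ?_ ?_)
    · exact bound1 Ntil a
    · exact bound2 Ntil b
  have hyb : ‖y‖ ≤ η * (‖b‖ + ‖a‖ / 2) := by
    rw [hy, norm_smul, Real.norm_eq_abs, abs_of_pos hη]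
    refine mul_le_mul_of_nonneg_left ?_ hη.le
    rw [hMt, toEucl_mulVec_sub]
    refine le_trans (norm_sub_le _ _) (add_le_add ?_ ?_)
    · exact bound1 Ntilᵀ b
    · exact bound2 Ntilᵀ a
  refine ⟨hop1, hop2, hxb, hyb, ?_⟩
  nlinarith [norm_nonneg a, norm_nonneg b, mul_nonneg hη.le (norm_nonneg a),
    mul_nonneg hη.le (norm_nonneg b)]
end

section
/- Consider the bilinear zero-sum game f(x,y) = α·xᵀy on ℝ^m×ℝ^m with α≠0 and stepsize η>0, and set h=ηα. The competitive gradient descent (CGD) iterates are given in closed form by x_{k+1} = (x_k − h·y_k)/(1+h²), y_{k+1} = (y_k + h·x_k)/(1+h²), and satisfy ‖x_{k+1}‖² + ‖y_{k+1}‖² = (‖x_k‖² + ‖y_k‖²)/(1+h²). Hence for every starting point and every η>0, the CGD iterates converge to the Nash equilibrium (0,0) at the exponential rate ‖x_k‖² + ‖y_k‖² = (1+η²α²)^{−k}(‖x₀‖² + ‖y₀‖²). -/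
open Matrix

lemma smul_one_inv_eucl (m : ℕ) (c : ℝ) (hc : c ≠ 0) :
    ((c • (1 : Matrix (Fin m) (Fin m) ℝ)))⁻¹ = c⁻¹ • 1 := by
  apply inv_eq_right_inv
  rw [smul_mul_smul_comm, one_mul, mul_inv_cancel₀ hc, one_smul]

/-- On the bilinear game `f(x,y) = α xᵀy` (where `∇_x f = αy`,
`∇_y f = αx`, `D²_{xy}f = α·Id`), the CGD iterates have the closed form
`x_{k+1} = (x_k − h y_k)/(1+h²)`, `y_{k+1} = (y_k + h x_k)/(1+h²)` with `h = ηα`,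
the squared norm decays by the factor `(1+h²)⁻¹`, and the iterates converge to `(0,0)`
at the exponential rate `(1+η²α²)^{−k}`. -/
theorem cgd_converges_bilinear (m : ℕ) (α η : ℝ) (hα : α ≠ 0) (hη : 0 < η)
    (x y : ℕ → EuclideanSpace ℝ (Fin m))
    (N : Matrix (Fin m) (Fin m) ℝ) (hN : N = α • (1 : Matrix (Fin m) (Fin m) ℝ))
    (hx : ∀ k, x (k + 1) = x k - η • toEucl
      ((((1 : Matrix (Fin m) (Fin m) ℝ) + η ^ 2 • (N * Nᵀ))⁻¹).mulVec
        (α • y k + η • toEucl (N.mulVec (α • x k)))))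
    (hy : ∀ k, y (k + 1) = y k + η • toEucl
      ((((1 : Matrix (Fin m) (Fin m) ℝ) + η ^ 2 • (Nᵀ * N))⁻¹).mulVec
        (α • x k - η • toEucl (Nᵀ.mulVec (α • y k))))) :
    (∀ k, x (k + 1) = (1 / (1 + (η * α) ^ 2)) • (x k - (η * α) • y k) ∧
          y (k + 1) = (1 / (1 + (η * α) ^ 2)) • (y k + (η * α) • x k)) ∧
    (∀ k, ‖x (k + 1)‖ ^ 2 + ‖y (k + 1)‖ ^ 2
        = (‖x k‖ ^ 2 + ‖y k‖ ^ 2) / (1 + (η * α) ^ 2)) ∧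
    (∀ k, ‖x k‖ ^ 2 + ‖y k‖ ^ 2
        = ((1 + η ^ 2 * α ^ 2) ^ k)⁻¹ * (‖x 0‖ ^ 2 + ‖y 0‖ ^ 2)) ∧
    Filter.Tendsto (fun k => (x k, y k)) Filter.atTop (nhds (0, 0)) := by
  set c : ℝ := 1 + (η * α) ^ 2 with hc
  have hcpos : (0 : ℝ) < c := by positivity
  have hcne : c ≠ 0 := ne_of_gt hcpos
  -- Matrix simplification
  have hmat : (1 : Matrix (Fin m) (Fin m) ℝ) + η ^ 2 • (N * Nᵀ) = c • 1 := by
    rw [hN]; ext i j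
    simp [Matrix.transpose_smul, Matrix.smul_mul, Matrix.mul_smul, smul_smul, hc,
      Matrix.one_apply, Matrix.add_apply, Matrix.smul_apply]
    split <;> ring_nf
  have hmat' : (1 : Matrix (Fin m) (Fin m) ℝ) + η ^ 2 • (Nᵀ * N) = c • 1 := by
    rw [hN]; ext i j
    simp [Matrix.transpose_smul, Matrix.smul_mul, Matrix.mul_smul, smul_smul, hc,
      Matrix.one_apply, Matrix.add_apply, Matrix.smul_apply]
    split <;> ring_nf
  have hinv : ((1 : Matrix (Fin m) (Fin m) ℝ) + η ^ 2 • (N * Nᵀ))⁻¹ = c⁻¹ • 1 := by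
    rw [hmat, smul_one_inv_eucl m c hcne]
  have hinv' : ((1 : Matrix (Fin m) (Fin m) ℝ) + η ^ 2 • (Nᵀ * N))⁻¹ = c⁻¹ • 1 := by
    rw [hmat', smul_one_inv_eucl m c hcne]
  -- closed form
  have hclosed : ∀ k, x (k + 1) = (1 / c) • (x k - (η * α) • y k) ∧
      y (k + 1) = (1 / c) • (y k + (η * α) • x k) := by
    intro k
    constructor
    · rw [hx k, hinv, hN]
      ext i
      simp only [toEucl, smul_mulVec, one_mulVec, PiLp.toLp_apply, Pi.add_apply, Pi.sub_apply, PiLp.sub_apply, PiLp.smul_apply,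
        PiLp.add_apply, Pi.smul_apply, smul_eq_mul]
      have : c ≠ 0 := hcne
      field_simp [hc]
      ring
    · rw [hy k, hinv', hN]
      ext i
      simp only [toEucl, transpose_smul, transpose_one, smul_mulVec, PiLp.toLp_apply, Pi.add_apply, Pi.sub_apply, one_mulVec,
        PiLp.sub_apply, PiLp.smul_apply, PiLp.add_apply, Pi.smul_apply, smul_eq_mul]
      field_simp [hc]
      ring
  -- norm decay
  have hnorm : ∀ k, ‖x (k + 1)‖ ^ 2 + ‖y (k + 1)‖ ^ 2 = (‖x k‖ ^ 2 + ‖y k‖ ^ 2) / c := by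
    intro k
    obtain ⟨h1, h2⟩ := hclosed k
    rw [h1, h2, norm_smul, norm_smul, mul_pow, mul_pow]
    have e1 : ‖x k - (η * α) • y k‖ ^ 2
        = ‖x k‖ ^ 2 - 2 * (η * α) * (inner ℝ (x k) (y k) : ℝ) + (η * α) ^ 2 * ‖y k‖ ^ 2 := by
      rw [norm_sub_sq_real, inner_smul_right, norm_smul]
      simp [mul_pow]; ring
    have e2 : ‖y k + (η * α) • x k‖ ^ 2
        = ‖y k‖ ^ 2 + 2 * (η * α) * (inner ℝ (x k) (y k) : ℝ) + (η * α) ^ 2 * ‖x k‖ ^ 2 := by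
      rw [norm_add_sq_real, inner_smul_right, norm_smul, real_inner_comm]
      simp [mul_pow]; ring
    rw [e1, e2]
    have : ‖(1 / c)‖ ^ 2 = 1 / c ^ 2 := by
      rw [Real.norm_eq_abs, abs_of_pos (by positivity), div_pow, one_pow]
    rw [this]
    field_simp
    ring
  -- exponential rate
  have hrate : ∀ k, ‖x k‖ ^ 2 + ‖y k‖ ^ 2
      = ((1 + η ^ 2 * α ^ 2) ^ k)⁻¹ * (‖x 0‖ ^ 2 + ‖y 0‖ ^ 2) := by
    have hcc : 1 + η ^ 2 * α ^ 2 = c := by rw [hc]; ring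
    intro k
    induction k with
    | zero => simp
    | succ n ih =>
        rw [hnorm n, ih, hcc, pow_succ c n, mul_inv, div_eq_mul_inv]
        ring
  refine ⟨hclosed, hnorm, hrate, ?_⟩
  -- convergence
  have hsum : Filter.Tendsto (fun k => ‖x k‖ ^ 2 + ‖y k‖ ^ 2) Filter.atTop (nhds 0) := by
    have hcc : 1 + η ^ 2 * α ^ 2 = c := by rw [hc]; ring
    have : Filter.Tendsto (fun k : ℕ => ((1 + η ^ 2 * α ^ 2) ^ k)⁻¹ * (‖x 0‖ ^ 2 + ‖y 0‖ ^ 2))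
        Filter.atTop (nhds (0 * (‖x 0‖ ^ 2 + ‖y 0‖ ^ 2))) := by
      apply Filter.Tendsto.mul_const
      simp only [← inv_pow]
      apply tendsto_pow_atTop_nhds_zero_of_lt_one
      · positivity
      · have hne : η * α ≠ 0 := mul_ne_zero hη.ne' hα
        have h2 : 0 < (η * α) ^ 2 := by positivity
        have h1c : 1 < c := by rw [hc]; linarith
        rw [hcc]
        exact inv_lt_one_of_one_lt₀ h1c
    simpa using this.congr (fun k => (hrate k).symm)
  have hx0 : Filter.Tendsto x Filter.atTop (nhds 0) := by
    rw [tendsto_zero_iff_norm_tendsto_zero]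
    have hsq : Filter.Tendsto (fun k => ‖x k‖ ^ 2) Filter.atTop (nhds 0) := by
      apply squeeze_zero (fun k => by positivity) (fun k => ?_) hsum
      nlinarith [sq_nonneg ‖y k‖]
    have := hsq.sqrt
    simpa [Real.sqrt_sq (norm_nonneg _)] using this
  have hy0 : Filter.Tendsto y Filter.atTop (nhds 0) := by
    rw [tendsto_zero_iff_norm_tendsto_zero]
    have hsq : Filter.Tendsto (fun k => ‖y k‖ ^ 2) Filter.atTop (nhds 0) := by
      apply squeeze_zero (fun k => by positivity) (fun k => ?_) hsum
      nlinarith [sq_nonneg ‖x k‖]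
    have := hsq.sqrt
    simpa [Real.sqrt_sq (norm_nonneg _)] using this
  exact hx0.prodMk_nhds hy0
end
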